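/- arXiv:2411.04875 — 2 statements merged into one kernel-verified Lean document; each statement's English description precedes it below -/
import Mathlib

section
/- Let A be a unital C*-algebra, a a nonzero positive element of A with a ≥ 1, and x ∈ A admitting an a-adjoint x^{#a}. Let φ be an Orlicz function, f ∈ S_a(A), and 0 ≤ α ≤ 1. Then φ(|f(a x)|²) ≤ α · f(φ(a x^{#a} x)) + (1 − α) · f(φ(a x x^{#a})), where a x^{#a} x = x* a x and a x x^{#a} = (x^{#a})* a x^{#a} are positive elements and φ is applied by continuous functional calculus. -/
/-!
Cauchy–Schwarz for the positive form `(u, v) ↦ f (u⋆ v)`, applied to `u = a^{1/2}` and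
`v = a^{1/2} x`, gives `|f (a x)|² ≤ f a · f (x⋆ a x) = f (a x^{#a} x)`. Since `x` is in turn an
`a`-adjoint of `x^{#a}` and `f (a x^{#a}) = conj (f (a x))`, likewise `|f (a x)|² ≤ f (a x x^{#a})`.

It remains to see that `t ≤ f y` with `y ≥ 0` forces `φ t ≤ f (φ y)`. Take a supporting line
`φ t + k (u - t) ≤ φ u` on `[0, ∞)` with `k ≥ 0` (monotonicity). Applying `f` to the operator
inequality `k y + (φ t - k t) ≤ φ y` and using `φ t - k t ≤ φ 0 = 0` and `f 1 ≤ f a = 1` gives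
`φ t ≤ k f y + (φ t - k t) f 1 ≤ f (φ y)`.
-/
open scoped ComplexOrder

section

variable {A : Type*} [CStarAlgebra A] [PartialOrder A] [StarOrderedRing A]

/-- A positive linear functional on `A`: `f (x* x) ≥ 0` for all `x`. -/
def IsPosLF (f : A →ₗ[ℂ] ℂ) : Prop := ∀ x : A, 0 ≤ f (star x * x)

/-- Membership in `S_a(A)`: positive linear functionals `f` with `f a = 1`. -/
def MemSa (a : A) (f : A →ₗ[ℂ] ℂ) : Prop := IsPosLF f ∧ f a = 1

/-- An Orlicz function: `φ : [0,∞) → [0,∞)` (modelled on `ℝ`) which is continuous, convex,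
non-decreasing on `[0,∞)`, with `φ 0 = 0`, `φ u > 0` for `u > 0`, and `φ u → ∞` as `u → ∞`. -/
structure IsOrlicz (φ : ℝ → ℝ) : Prop where
  continuousOn : ContinuousOn φ (Set.Ici 0)
  convexOn : ConvexOn ℝ (Set.Ici 0) φ
  monotoneOn : MonotoneOn φ (Set.Ici 0)
  map_zero : φ 0 = 0
  pos : ∀ u : ℝ, 0 < u → 0 < φ u
  tendsto_atTop : Filter.Tendsto φ Filter.atTop Filter.atTop

open Set in
lemma ConvexOn.add_leftDeriv_mul_sub_le {S : Set ℝ} {φ : ℝ → ℝ} (hφ : ConvexOn ℝ S φ)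
    {t u : ℝ} (ht : t ∈ interior S) (hu : u ∈ S) :
    φ t + derivWithin φ (Iio t) t * (u - t) ≤ φ u := by
  rcases lt_trichotomy u t with hut | rfl | htu
  · have h := hφ.slope_le_leftDeriv_of_mem_interior hu ht hut
    rw [slope_def_field, div_le_iff₀ (sub_pos.2 hut)] at h
    linarith
  · simp
  · have h := (hφ.leftDeriv_le_rightDeriv_of_mem_interior ht).trans
      (hφ.rightDeriv_le_slope_of_mem_interior ht hu htu)
    rw [slope_def_field, le_div_iff₀ (sub_pos.2 htu)] at h
    linarith

open Set in
lemma MonotoneOn.exists_nonneg_subgradient_of_convexOn {φ : ℝ → ℝ}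
    (hm : MonotoneOn φ (Ici 0)) (hc : ConvexOn ℝ (Ici 0) φ) {t : ℝ} (ht : 0 ≤ t) :
    ∃ k, 0 ≤ k ∧ ∀ u, 0 ≤ u → φ t + k * (u - t) ≤ φ u := by
  rcases ht.eq_or_lt with rfl | ht
  · exact ⟨0, le_rfl, fun u hu => by simpa using hm self_mem_Ici hu hu⟩
  have ht' : t ∈ interior (Ici 0) := by rwa [interior_Ici]
  refine ⟨_, ?_, fun u hu => hc.add_leftDeriv_mul_sub_le ht' hu⟩
  calc (0 : ℝ) ≤ slope φ 0 t := by
        rw [slope_def_field]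
        exact div_nonneg (sub_nonneg.2 (hm self_mem_Ici ht.le ht.le)) (by simpa using ht.le)
    _ ≤ _ := hc.slope_le_leftDeriv_of_mem_interior self_mem_Ici ht' ht

lemma IsSelfAdjoint.mul_eq_star_mul_symm {R : Type*} [Mul R] [StarMul R] {a x y : R}
    (ha : IsSelfAdjoint a) (h : a * y = star x * a) : a * x = star y * a := by
  simpa [ha.star_eq] using (congrArg star h).symm

lemma mul_mul_nonneg_of_mul_eq_star_mul {R : Type*} [NonUnitalSemiring R] [PartialOrder R]
    [StarRing R] [StarOrderedRing R] {a x y : R} (ha : 0 ≤ a) (h : a * y = star x * a) :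
    0 ≤ a * (y * x) := by
  rw [← mul_assoc, h]
  exact star_left_conjugate_nonneg ha x

lemma IsPosLF.map_nonneg {f : A →ₗ[ℂ] ℂ} (hf : IsPosLF f) {z : A} (hz : 0 ≤ z) : 0 ≤ f z := by
  simpa [(CFC.sqrt_nonneg z).isSelfAdjoint.star_eq, CFC.sqrt_mul_sqrt_self z hz] using
    hf (CFC.sqrt z)

lemma IsPosLF.exists_toLinearMap_eq {f : A →ₗ[ℂ] ℂ} (hf : IsPosLF f) :
    ∃ g : A →ₚ[ℂ] ℂ, g.toLinearMap = f :=
  ⟨.mk₀ f fun _ => hf.map_nonneg, rfl⟩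

namespace PositiveLinearMap

variable (f : A →ₚ[ℂ] ℂ)

lemma norm_apply_star_mul_sq_le (u v : A) :
    ‖f (star u * v)‖ ^ 2 ≤ (f (star u * u)).re * (f (star v * v)).re := by
  have h := norm_inner_le_norm (𝕜 := ℂ) (f.toPreGNS u) (f.toPreGNS v)
  have hsq (w : A) : ‖f.toPreGNS w‖ ^ 2 = (f (star w * w)).re := by
    rw [preGNS_norm_def, ofPreGNS_toPreGNS,
      Real.sq_sqrt (Complex.re_le_re (f.map_nonneg (star_mul_self_nonneg w)))]
  rw [preGNS_inner_def] at h
  rw [← hsq, ← hsq, ← mul_pow]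
  exact pow_le_pow_left₀ (norm_nonneg _) h 2

lemma norm_apply_mul_sq_le {a : A} (ha : 0 ≤ a) (x : A) :
    ‖f (a * x)‖ ^ 2 ≤ (f a).re * (f (star x * a * x)).re := by
  have hs : star (CFC.sqrt a) = CFC.sqrt a := (CFC.sqrt_nonneg a).isSelfAdjoint.star_eq
  have hsa : CFC.sqrt a * CFC.sqrt a = a := CFC.sqrt_mul_sqrt_self a ha
  have h := f.norm_apply_star_mul_sq_le (CFC.sqrt a) (CFC.sqrt a * x)
  rwa [star_mul, hs, ← mul_assoc, hsa, mul_assoc, ← mul_assoc (CFC.sqrt a), hsa, ← mul_assoc] at h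

lemma norm_apply_mul_sq_le_of_mul_eq_star_mul {a x y : A} (ha : 0 ≤ a)
    (h : a * y = star x * a) : ‖f (a * x)‖ ^ 2 ≤ (f a).re * (f (a * (y * x))).re := by
  rw [← mul_assoc, h]
  exact f.norm_apply_mul_sq_le ha x

lemma norm_apply_mul_sq_le_of_mul_eq_star_mul' {a x y : A} (ha : 0 ≤ a)
    (h : a * y = star x * a) : ‖f (a * x)‖ ^ 2 ≤ (f a).re * (f (a * (x * y))).re := by
  have hy : f (a * y) = star (f (a * x)) := by
    rw [h, ← map_star, star_mul, ha.isSelfAdjoint.star_eq]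
  simpa [hy] using
    f.norm_apply_mul_sq_le_of_mul_eq_star_mul ha (ha.isSelfAdjoint.mul_eq_star_mul_symm h)

open Set in
lemma le_re_apply_cfc_of_le_re_apply {φ : ℝ → ℝ} (hcont : ContinuousOn φ (Ici 0))
    (hconv : ConvexOn ℝ (Ici 0) φ) (hmono : MonotoneOn φ (Ici 0)) (hφ0 : φ 0 = 0)
    (hf1 : (f 1).re ≤ 1) {t : ℝ} (ht : 0 ≤ t) {y : A} (hy : 0 ≤ y) (hty : t ≤ (f y).re) :
    φ t ≤ (f (cfc φ y)).re := by
  obtain ⟨k, hk, hsub⟩ := hmono.exists_nonneg_subgradient_of_convexOn hconv ht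
  have hspec : spectrum ℝ y ⊆ Ici 0 := fun u hu => spectrum_nonneg_of_nonneg hy hu
  have hle : k • y + algebraMap ℝ A (φ t - k * t) ≤ cfc φ y :=
    calc _ = cfc (fun u => k * u + (φ t - k * t)) y := by
          rw [cfc_add_const _ _ y (by fun_prop), cfc_const_mul_id _ y]
      _ ≤ cfc φ y :=
          cfc_mono (fun u hu => by linarith [hsub u (hspec hu)]) (by fun_prop) (hcont.mono hspec)
  have hre : (f (k • y + algebraMap ℝ A (φ t - k * t))).re =
      k * (f y).re + (φ t - k * t) * (f 1).re := by
    simp [Algebra.algebraMap_eq_smul_one, map_smul_of_tower]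
  have hneg : φ t - k * t ≤ 0 := by simpa [hφ0] using hsub 0 le_rfl
  calc φ t ≤ k * (f y).re + (φ t - k * t) * (f 1).re := by
        linarith [mul_le_mul_of_nonneg_left hty hk, mul_le_mul_of_nonpos_left hf1 hneg]
    _ ≤ (f (cfc φ y)).re := hre ▸ Complex.re_le_re (f.monotone' hle)

end PositiveLinearMap

theorem stmt4_general (a : A) (ha : 0 ≤ a) (ha1 : 1 ≤ a)
    (x xadj : A) (hadj : a * xadj = star x * a)
    (φ : ℝ → ℝ) (hφ : IsOrlicz φ)
    (f : A →ₗ[ℂ] ℂ) (hf : MemSa a f)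
    (α : ℝ) (hα0 : 0 ≤ α) (hα1 : α ≤ 1) :
    φ (‖f (a * x)‖ ^ 2) ≤
      α * (f (cfc φ (a * (xadj * x)))).re +
        (1 - α) * (f (cfc φ (a * (x * xadj)))).re := by
  obtain ⟨g, rfl⟩ := hf.1.exists_toLinearMap_eq
  simp only [PositiveLinearMap.coe_toLinearMap]
  have hfa : (g a).re = 1 := by simpa using congrArg Complex.re hf.2
  have hg1 : (g 1).re ≤ 1 := hfa ▸ Complex.re_le_re (g.monotone' ha1)
  have key {y : A} (hy : 0 ≤ y) (hty : ‖g (a * x)‖ ^ 2 ≤ (g y).re) :=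
    g.le_re_apply_cfc_of_le_re_apply hφ.continuousOn hφ.convexOn hφ.monotoneOn hφ.map_zero hg1
      (sq_nonneg _) hy hty
  have h1 := key (mul_mul_nonneg_of_mul_eq_star_mul ha hadj)
    (by simpa [hfa] using g.norm_apply_mul_sq_le_of_mul_eq_star_mul ha hadj)
  have h2 := key (mul_mul_nonneg_of_mul_eq_star_mul ha (ha.isSelfAdjoint.mul_eq_star_mul_symm hadj))
    (by simpa [hfa] using g.norm_apply_mul_sq_le_of_mul_eq_star_mul' ha hadj)
  linarith [mul_le_mul_of_nonneg_left h1 hα0, mul_le_mul_of_nonneg_left h2 (sub_nonneg.2 hα1)]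

/-- Orlicz-function bound for `φ(|f(a x)|²)`. -/
theorem stmt4 (a : A) (ha : 0 ≤ a) (ha0 : a ≠ 0) (ha1 : 1 ≤ a)
    (x xadj : A) (hadj : a * xadj = star x * a)
    (φ : ℝ → ℝ) (hφ : IsOrlicz φ)
    (f : A →ₗ[ℂ] ℂ) (hf : MemSa a f)
    (α : ℝ) (hα0 : 0 ≤ α) (hα1 : α ≤ 1) :
    φ (‖f (a * x)‖ ^ 2) ≤
      α * (f (cfc φ (a * (xadj * x)))).re +
        (1 - α) * (f (cfc φ (a * (x * xadj)))).re :=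
  stmt4_general a ha ha1 x xadj hadj φ hφ f hf α hα0 hα1

end
end

section
/- Let A be a unital C*-algebra, a a nonzero positive element of A, and x ∈ A admitting an a-adjoint x^{#a}, with ‖x‖_a < ∞ and ‖x^{#a}‖_a < ∞. Then for every real r ≥ 1, v_a(x)^{2r} ≤ (1/2)·v_a(x²)^r + (1/2^{r+1})·‖x x^{#a} + x^{#a} x‖_a^r. -/
/-!
For `f ∈ S_a(A)` the form `(u, v) ↦ f (u* a v)` is the inner product of the GNS space of `f`
evaluated at `√a u` and `√a v`. For `e = √a`, `u = √a x`, `v = √a x^{#a}` one has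
`⟪e, u⟫ = ⟪v, e⟫ = f (a x)`, `⟪v, u⟫ = f (a x²)` and `‖u‖² + ‖v‖² = f (a (x x^{#a} + x^{#a} x))`,
so Buzano's inequality `2 |⟪v, e⟫| |⟪e, u⟫| ≤ |⟪v, u⟫| + ‖v‖ ‖u‖` and AM-GM give
`vₐ(x)² ≤ ½ vₐ(x²) + ¼ ‖x x^{#a} + x^{#a} x‖ₐ`; convexity of `t ↦ t ^ r` finishes the proof.

The suprema `vₐ(x²)` and `‖x x^{#a} + x^{#a} x‖ₐ` are `sSup`s of real sets, which are `0` when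
unbounded; they are bounded because `‖y z‖ₐ ≤ ‖y‖ₐ ‖z‖ₐ`, proved by testing `y` against the
positive functional `w ↦ f (z* w z)` perturbed by a small multiple of `f`.
-/

open scoped ComplexOrder

section

variable {A : Type*} [CStarAlgebra A] [PartialOrder A] [StarOrderedRing A]

/-- The set of values whose supremum is the `a`-seminorm `‖x‖ₐ`. -/
def aNormSet (a x : A) : Set ℝ :=
  {r : ℝ | ∃ f : A →ₗ[ℂ] ℂ, MemSa a f ∧ r = Real.sqrt (f (star x * a * x)).re}

/-- The `a`-seminorm `‖x‖ₐ = sup {√(f(x* a x)) : f ∈ S_a(A)}`. -/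
noncomputable def aNorm (a x : A) : ℝ := sSup (aNormSet a x)

/-- The `a`-numerical radius `vₐ(x) = sup {|f(a x)| : f ∈ S_a(A)}`. -/
noncomputable def aNR (a x : A) : ℝ :=
  sSup {r : ℝ | ∃ f : A →ₗ[ℂ] ℂ, MemSa a f ∧ r = ‖f (a * x)‖}

open scoped InnerProductSpace

theorem two_mul_norm_inner_mul_norm_inner_le {𝕜 E : Type*} [RCLike 𝕜] [SeminormedAddCommGroup E]
    [InnerProductSpace 𝕜 E] {e : E} (he : ‖e‖ = 1) (u v : E) :
    2 * (‖⟪v, e⟫_𝕜‖ * ‖⟪e, u⟫_𝕜‖) ≤ ‖⟪v, u⟫_𝕜‖ + ‖v‖ * ‖u‖ := by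
  set c := ⟪e, u⟫_𝕜
  -- `w` is the reflection of `u` in the line through `e`
  set w := (2 * c) • e - u
  have hw : ‖w‖ = ‖u‖ := by
    have hre : RCLike.re ⟪(2 * c) • e, u⟫_𝕜 = 2 * ‖c‖ ^ 2 := by
      rw [inner_smul_left, map_mul (starRingEnd 𝕜), mul_assoc, RCLike.conj_mul]
      simp
    have : ‖w‖ ^ 2 = ‖u‖ ^ 2 := by
      rw [norm_sub_sq (𝕜 := 𝕜), hre, norm_smul, he, norm_mul, RCLike.norm_two]
      ring
    exact (sq_eq_sq₀ (norm_nonneg _) (norm_nonneg _)).1 this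
  have hvw : ⟪v, u⟫_𝕜 + ⟪v, w⟫_𝕜 = (2 * c) * ⟪v, e⟫_𝕜 := by
    rw [inner_sub_right, inner_smul_right]; ring
  calc 2 * (‖⟪v, e⟫_𝕜‖ * ‖c‖) = ‖(2 * c) * ⟪v, e⟫_𝕜‖ := by
        rw [norm_mul, norm_mul, RCLike.norm_two]; ring
    _ ≤ ‖⟪v, u⟫_𝕜‖ + ‖⟪v, w⟫_𝕜‖ := hvw ▸ norm_add_le _ _
    _ ≤ ‖⟪v, u⟫_𝕜‖ + ‖v‖ * ‖u‖ := by grw [norm_inner_le_norm v w, hw]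

theorem Real.rpow_two_mul_le_of_sq_le {v M K r : ℝ} (hv : 0 ≤ v) (hM : 0 ≤ M) (hK : 0 ≤ K)
    (h : v ^ 2 ≤ 1 / 2 * M + 1 / 4 * K) (hr : 1 ≤ r) :
    v ^ (2 * r) ≤ 1 / 2 * M ^ r + 1 / 2 ^ (r + 1) * K ^ r := by
  have hconv := (convexOn_rpow hr).2 (Set.mem_Ici.2 hM)
    (Set.mem_Ici.2 (by positivity : 0 ≤ K / 2)) (by norm_num : (0 : ℝ) ≤ 1 / 2)
    (by norm_num : (0 : ℝ) ≤ 1 / 2) (by norm_num)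
  simp only [smul_eq_mul] at hconv
  calc v ^ (2 * r) = (v ^ 2) ^ r := by rw [Real.rpow_mul hv, Real.rpow_two]
    _ ≤ (1 / 2 * M + 1 / 2 * (K / 2)) ^ r := by
      gcongr
      linarith
    _ ≤ 1 / 2 * M ^ r + 1 / 2 * (K / 2) ^ r := hconv
    _ = 1 / 2 * M ^ r + 1 / 2 ^ (r + 1) * K ^ r := by
      rw [Real.div_rpow hK zero_le_two, Real.rpow_add_one two_ne_zero]
      field_simp

noncomputable def IsPosLF.toPositiveLinearMap {f : A →ₗ[ℂ] ℂ} (hf : IsPosLF f) : A →ₚ[ℂ] ℂ :=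
  PositiveLinearMap.mk₀ f fun y hy => by
    simpa [(CFC.sqrt_nonneg y).star_eq, CFC.sqrt_mul_sqrt_self y hy] using hf (CFC.sqrt y)

@[simp]
lemma IsPosLF.toPositiveLinearMap_apply {f : A →ₗ[ℂ] ℂ} (hf : IsPosLF f) (y : A) :
    hf.toPositiveLinearMap y = f y := rfl

lemma IsPosLF.re_apply_star_mul_mul_nonneg {a : A} (ha : 0 ≤ a) {f : A →ₗ[ℂ] ℂ}
    (hf : IsPosLF f) (w : A) : 0 ≤ (f (star w * a * w)).re :=
  (Complex.nonneg_iff.1 (hf.toPositiveLinearMap.map_nonneg (star_left_conjugate_nonneg ha w))).1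

omit [PartialOrder A] [StarOrderedRing A] in
lemma IsPosLF.comp_conjugate {f : A →ₗ[ℂ] ℂ} (hf : IsPosLF f) (z : A) :
    IsPosLF (f ∘ₗ LinearMap.mulLeft ℂ (star z) ∘ₗ LinearMap.mulRight ℂ z) := fun w => by
  simpa [mul_assoc] using hf (w * z)

omit [PartialOrder A] [StarOrderedRing A] in
lemma IsPosLF.re_apply_le_of_forall_memSa {a y : A} {C : ℝ}
    (hC : ∀ f, MemSa a f → (f y).re ≤ C) {h : A →ₗ[ℂ] ℂ} (hh : IsPosLF h) {s : ℝ}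
    (hs : h a = s) (hs0 : 0 < s) : (h y).re ≤ C * s := by
  have hnorm : MemSa a (((s⁻¹ : ℝ) : ℂ) • h) := by
    refine ⟨fun w => ?_, ?_⟩
    · exact mul_nonneg (Complex.zero_le_real.2 (inv_nonneg.2 hs0.le)) (hh w)
    · rw [LinearMap.smul_apply, hs, smul_eq_mul, ← Complex.ofReal_mul, inv_mul_cancel₀ hs0.ne',
        Complex.ofReal_one]
  have := hC _ hnorm
  rw [LinearMap.smul_apply, smul_eq_mul, Complex.re_ofReal_mul] at this
  rwa [inv_mul_le_iff₀ hs0, mul_comm] at this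

lemma IsPosLF.re_apply_star_mul_mul_le {a y : A} (ha : 0 ≤ a) {f : A →ₗ[ℂ] ℂ} (hf : MemSa a f)
    {C : ℝ} (hC : ∀ f, MemSa a f → (f (star y * a * y)).re ≤ C) {g : A →ₗ[ℂ] ℂ} (hg : IsPosLF g) :
    (g (star y * a * y)).re ≤ C * (g a).re := by
  obtain ⟨r, hr, hga⟩ := RCLike.nonneg_iff_exists_ofReal.1 (hg.toPositiveLinearMap.map_nonneg ha)
  replace hga : g a = r := hga.symm
  rw [hga, Complex.ofReal_re]
  have hfy := hf.1.re_apply_star_mul_mul_nonneg ha y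
  have hC0 : 0 ≤ C := hfy.trans (hC f hf)
  -- `g + t • f` is a positive multiple of an element of `S_a(A)` for every `t > 0`
  have hpert : ∀ t > 0, (g (star y * a * y)).re ≤ C * r + t * C := by
    intro t ht
    have hpos : IsPosLF (g + (t : ℂ) • f) := fun w =>
      add_nonneg (hg w) (mul_nonneg (Complex.zero_le_real.2 ht.le) (hf.1 w))
    have := hpos.re_apply_le_of_forall_memSa hC (s := r + t) (by simp [hga, hf.2]) (by positivity)
    simp only [LinearMap.add_apply, LinearMap.smul_apply, smul_eq_mul, Complex.add_re,
      Complex.re_ofReal_mul] at this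
    nlinarith
  refine le_of_forall_pos_le_add fun ε hε => ?_
  calc (g (star y * a * y)).re ≤ C * r + ε / (C + 1) * C := hpert _ (by positivity)
    _ ≤ C * r + ε := by
      gcongr
      rw [div_mul_eq_mul_div, div_le_iff₀ (by positivity)]
      nlinarith

lemma star_sqrt_mul_sqrt_mul {a : A} (ha : 0 ≤ a) (u v : A) :
    star (CFC.sqrt a * u) * (CFC.sqrt a * v) = star u * a * v := by
  rw [star_mul, (CFC.sqrt_nonneg a).star_eq, mul_assoc, ← mul_assoc (CFC.sqrt a),
    CFC.sqrt_mul_sqrt_self a ha, ← mul_assoc]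

namespace PositiveLinearMap

noncomputable def sqrtMulToPreGNS (f : A →ₚ[ℂ] ℂ) (a : A) : A →ₗ[ℂ] f.PreGNS :=
  f.toPreGNS.toLinearMap ∘ₗ LinearMap.mulLeft ℂ (CFC.sqrt a)

variable (f : A →ₚ[ℂ] ℂ) {a : A}

lemma inner_sqrtMulToPreGNS (ha : 0 ≤ a) (u v : A) :
    ⟪f.sqrtMulToPreGNS a u, f.sqrtMulToPreGNS a v⟫_ℂ = f (star u * a * v) :=
  congrArg f (star_sqrt_mul_sqrt_mul ha u v)

lemma norm_sqrtMulToPreGNS (ha : 0 ≤ a) (u : A) :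
    ‖f.sqrtMulToPreGNS a u‖ = √(f (star u * a * u)).re :=
  congrArg (fun y => √(f y).re) (star_sqrt_mul_sqrt_mul ha u u)

lemma norm_sqrtMulToPreGNS_one (ha : 0 ≤ a) (hfa : f a = 1) : ‖f.sqrtMulToPreGNS a 1‖ = 1 := by
  simp [norm_sqrtMulToPreGNS f ha, hfa]

end PositiveLinearMap

def aNRSet (a x : A) : Set ℝ := {r : ℝ | ∃ f : A →ₗ[ℂ] ℂ, MemSa a f ∧ r = ‖f (a * x)‖}

omit [PartialOrder A] [StarOrderedRing A] in
lemma aNR_nonneg (a x : A) : 0 ≤ aNR a x :=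
  Real.sSup_nonneg (by rintro _ ⟨f, -, rfl⟩; exact norm_nonneg _)

omit [PartialOrder A] [StarOrderedRing A] in
lemma aNorm_nonneg (a x : A) : 0 ≤ aNorm a x :=
  Real.sSup_nonneg (by rintro _ ⟨f, -, rfl⟩; exact Real.sqrt_nonneg _)

omit [PartialOrder A] [StarOrderedRing A] in
lemma sqrt_le_aNorm {a y : A} (hy : BddAbove (aNormSet a y)) {f : A →ₗ[ℂ] ℂ} (hf : MemSa a f) :
    √(f (star y * a * y)).re ≤ aNorm a y :=
  le_csSup hy ⟨f, hf, rfl⟩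

omit [PartialOrder A] [StarOrderedRing A] in
lemma re_apply_le_aNorm_sq {a y : A} (hy : BddAbove (aNormSet a y)) {f : A →ₗ[ℂ] ℂ}
    (hf : MemSa a f) : (f (star y * a * y)).re ≤ aNorm a y ^ 2 :=
  (Real.sqrt_le_iff.1 (sqrt_le_aNorm hy hf)).2

lemma sqrt_le_aNorm_mul_aNorm {a y z : A} (ha : 0 ≤ a) (hy : BddAbove (aNormSet a y))
    (hz : BddAbove (aNormSet a z)) {f : A →ₗ[ℂ] ℂ} (hf : MemSa a f) :
    √(f (star (y * z) * a * (y * z))).re ≤ aNorm a y * aNorm a z := by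
  have hconj := hf.1.comp_conjugate z
  have key := hconj.re_apply_star_mul_mul_le ha hf (fun f' hf' => re_apply_le_aNorm_sq hy hf')
  simp only [LinearMap.comp_apply, LinearMap.mulRight_apply, LinearMap.mulLeft_apply] at key
  refine Real.sqrt_le_iff.2 ⟨mul_nonneg (aNorm_nonneg a y) (aNorm_nonneg a z), ?_⟩
  calc (f (star (y * z) * a * (y * z))).re = (f (star z * (star y * a * y * z))).re := by
        simp only [star_mul, mul_assoc]
    _ ≤ aNorm a y ^ 2 * (f (star z * (a * z))).re := key
    _ ≤ aNorm a y ^ 2 * aNorm a z ^ 2 := by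
      rw [← mul_assoc]
      gcongr
      exact re_apply_le_aNorm_sq hz hf
    _ = (aNorm a y * aNorm a z) ^ 2 := by ring

lemma bddAbove_aNormSet_mul {a y z : A} (ha : 0 ≤ a) (hy : BddAbove (aNormSet a y))
    (hz : BddAbove (aNormSet a z)) : BddAbove (aNormSet a (y * z)) :=
  ⟨aNorm a y * aNorm a z, by rintro _ ⟨f, hf, rfl⟩; exact sqrt_le_aNorm_mul_aNorm ha hy hz hf⟩

lemma bddAbove_aNormSet_add {a y z : A} (ha : 0 ≤ a) (hy : BddAbove (aNormSet a y))
    (hz : BddAbove (aNormSet a z)) : BddAbove (aNormSet a (y + z)) := by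
  refine ⟨aNorm a y + aNorm a z, ?_⟩
  rintro _ ⟨f, hf, rfl⟩
  let F := hf.1.toPositiveLinearMap
  have := norm_add_le (F.sqrtMulToPreGNS a y) (F.sqrtMulToPreGNS a z)
  simp only [← map_add, F.norm_sqrtMulToPreGNS ha, IsPosLF.toPositiveLinearMap_apply, F] at this
  grw [this, sqrt_le_aNorm hy hf, sqrt_le_aNorm hz hf]

lemma norm_apply_mul_le_sqrt {a : A} (ha : 0 ≤ a) {f : A →ₗ[ℂ] ℂ} (hf : MemSa a f) (y : A) :
    ‖f (a * y)‖ ≤ √(f (star y * a * y)).re := by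
  let F := hf.1.toPositiveLinearMap
  have := norm_inner_le_norm (𝕜 := ℂ) (F.sqrtMulToPreGNS a 1) (F.sqrtMulToPreGNS a y)
  rw [F.inner_sqrtMulToPreGNS ha, F.norm_sqrtMulToPreGNS_one ha hf.2, one_mul,
    F.norm_sqrtMulToPreGNS ha] at this
  simpa [F] using this

lemma norm_apply_mul_le_aNorm {a y : A} (ha : 0 ≤ a) (hy : BddAbove (aNormSet a y))
    {f : A →ₗ[ℂ] ℂ} (hf : MemSa a f) : ‖f (a * y)‖ ≤ aNorm a y :=
  (norm_apply_mul_le_sqrt ha hf y).trans (sqrt_le_aNorm hy hf)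

lemma bddAbove_aNRSet {a y : A} (ha : 0 ≤ a) (hy : BddAbove (aNormSet a y)) :
    BddAbove (aNRSet a y) :=
  ⟨aNorm a y, by rintro _ ⟨f, hf, rfl⟩; exact norm_apply_mul_le_aNorm ha hy hf⟩

lemma norm_apply_mul_sq_le {a x xadj : A} (ha : 0 ≤ a) (hadj : a * xadj = star x * a)
    {f : A →ₗ[ℂ] ℂ} (hf : MemSa a f) :
    ‖f (a * x)‖ ^ 2 ≤ 1 / 2 * ‖f (a * (x * x))‖ +
      1 / 4 * √(f (star (x * xadj + xadj * x) * a * (x * xadj + xadj * x))).re := by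
  have hadj' : star xadj * a = a * x := by
    simpa [ha.isSelfAdjoint.star_eq] using congrArg star hadj
  let F := hf.1.toPositiveLinearMap
  set e := F.sqrtMulToPreGNS a 1
  set u := F.sqrtMulToPreGNS a x
  set v := F.sqrtMulToPreGNS a xadj
  have hve : ⟪v, e⟫_ℂ = f (a * x) := by simp [v, e, F.inner_sqrtMulToPreGNS ha, F, hadj']
  have heu : ⟪e, u⟫_ℂ = f (a * x) := by simp [u, e, F.inner_sqrtMulToPreGNS ha, F]
  have hvu : ⟪v, u⟫_ℂ = f (a * (x * x)) := by
    simp [u, v, F.inner_sqrtMulToPreGNS ha, F, hadj', mul_assoc]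
  have hnorms : ‖u‖ ^ 2 + ‖v‖ ^ 2 = (f (a * (x * xadj + xadj * x))).re := by
    simp only [u, v, F.norm_sqrtMulToPreGNS ha, IsPosLF.toPositiveLinearMap_apply, F]
    rw [Real.sq_sqrt (hf.1.re_apply_star_mul_mul_nonneg ha x),
      Real.sq_sqrt (hf.1.re_apply_star_mul_mul_nonneg ha xadj), ← hadj, hadj', mul_add, map_add,
      Complex.add_re, mul_assoc, mul_assoc, add_comm]
  have hbuzano :=
    two_mul_norm_inner_mul_norm_inner_le (𝕜 := ℂ) (F.norm_sqrtMulToPreGNS_one ha hf.2) u v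
  rw [hve, heu, hvu] at hbuzano
  have hamgm := two_mul_le_add_sq ‖v‖ ‖u‖
  have hre := (Complex.re_le_norm _).trans (norm_apply_mul_le_sqrt ha hf (x * xadj + xadj * x))
  rw [sq]
  linarith

lemma aNR_sq_le {a x xadj : A} (ha : 0 ≤ a) (hadj : a * xadj = star x * a)
    (hx : BddAbove (aNormSet a x)) (hxadj : BddAbove (aNormSet a xadj)) :
    aNR a x ^ 2 ≤ 1 / 2 * aNR a (x * x) + 1 / 4 * aNorm a (x * xadj + xadj * x) := by
  have hxx : BddAbove (aNRSet a (x * x)) := bddAbove_aNRSet ha (bddAbove_aNormSet_mul ha hx hx)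
  have hc : BddAbove (aNormSet a (x * xadj + xadj * x)) :=
    bddAbove_aNormSet_add ha (bddAbove_aNormSet_mul ha hx hxadj)
      (bddAbove_aNormSet_mul ha hxadj hx)
  have hD : 0 ≤ 1 / 2 * aNR a (x * x) + 1 / 4 * aNorm a (x * xadj + xadj * x) := by
    linarith [aNR_nonneg a (x * x), aNorm_nonneg a (x * xadj + xadj * x)]
  refine (Real.le_sqrt (aNR_nonneg a x) hD).1 (Real.sSup_le ?_ (Real.sqrt_nonneg _))
  rintro _ ⟨f, hf, rfl⟩
  refine Real.le_sqrt_of_sq_le ((norm_apply_mul_sq_le ha hadj hf).trans ?_)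
  gcongr
  · exact le_csSup hxx ⟨f, hf, rfl⟩
  · exact sqrt_le_aNorm hc hf

theorem stmt9_general (a : A) (ha : 0 ≤ a)
    (x xadj : A) (hadj : a * xadj = star x * a)
    (hx : BddAbove (aNormSet a x)) (hxadj : BddAbove (aNormSet a xadj))
    (r : ℝ) (hr : 1 ≤ r) :
    aNR a x ^ (2 * r) ≤
      (1 / 2) * aNR a (x * x) ^ r +
        (1 / (2 : ℝ) ^ (r + 1)) * aNorm a (x * xadj + xadj * x) ^ r :=
  Real.rpow_two_mul_le_of_sq_le (aNR_nonneg a x) (aNR_nonneg a _) (aNorm_nonneg a _)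
    (aNR_sq_le ha hadj hx hxadj) hr

/-- `vₐ(x)^{2r} ≤ ½ vₐ(x²)^r + (1/2^{r+1}) ‖x x^{#a} + x^{#a} x‖ₐ^r`. -/
theorem stmt9 (a : A) (ha : 0 ≤ a) (ha0 : a ≠ 0)
    (x xadj : A) (hadj : a * xadj = star x * a)
    (hx : BddAbove (aNormSet a x)) (hxadj : BddAbove (aNormSet a xadj))
    (r : ℝ) (hr : 1 ≤ r) :
    aNR a x ^ (2 * r) ≤
      (1 / 2) * aNR a (x * x) ^ r +
        (1 / (2 : ℝ) ^ (r + 1)) * aNorm a (x * xadj + xadj * x) ^ r :=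
  stmt9_general a ha x xadj hadj hx hxadj r hr

end
end
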